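/- Lemma (depth witnesses, Algorithm 1): In any reachable configuration of Algorithm 1 starting from the initial configuration (all agents have depth ⊥), for every agent v₁ with depth_{v₁} ∉ {⊥, 1}, at some point there was an interaction with an agent v₂ adjacent to v₁ in the communication graph such that depth_{v₁} = depth_{v₂} + 1, and depth_{v₂} never changes afterwards; and every agent v with depth_v = 1 is adjacent to the base station. -/

import Mathlib

/-- Agent colors of Algorithm 1. -/
inductive Col : Type
  | ini | r | b
deriving DecidableEq

/-- Base-station variable `RB`. -/
inductive RB : Type
  | r | b
deriving DecidableEq

/-- Flip the base-station variable. -/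
def RB.flip : RB → RB
  | .r => .b
  | .b => .r

/-- The color assigned by the base station. -/
def RB.toCol : RB → Col
  | .r => .r
  | .b => .b

/-- An agent state: a color and a depth (`none` is ⊥). -/
abbrev AgSt := Col × Option ℕ

/-- Effect of an interaction between the base station and one agent. -/
def bsStep (rb : RB) (a : AgSt) : RB × AgSt :=
  match a with
  | (.ini, some 1) => (rb.flip, (rb.toCol, some 1))
  | (c, none)      => (rb, (c, some 1))
  | a              => (rb, a)

/-- Effect of an interaction between two agents x and y:
first the depth propagation, then the color swap towards a smaller depth. -/
def agStep (x y : AgSt) : AgSt × AgSt :=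
  let d : Option ℕ × Option ℕ :=
    match x.2, y.2 with
    | none, some e => (some (e + 1), some e)
    | some e, none => (some e, some (e + 1))
    | dx, dy       => (dx, dy)
  match d with
  | (some dx, some dy) =>
      if dx < dy ∧ y.1 = Col.ini then ((Col.ini, some dx), (x.1, some dy))
      else if dy < dx ∧ x.1 = Col.ini then ((y.1, some dx), (Col.ini, some dy))
      else ((x.1, some dx), (y.1, some dy))
  | (dx, dy) => ((x.1, dx), (y.1, dy))

/-- A configuration: the base-station variable together with the agents' states. -/
abbrev Conf (n : ℕ) := RB × (Fin n → AgSt)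

/-- One step of Algorithm 1 on a communication graph: either the base station
interacts with an adjacent agent, or two adjacent distinct agents interact. -/
def Step {n : ℕ} (Adj : Fin n → Fin n → Prop) (BAdj : Fin n → Prop)
    (c c' : Conf n) : Prop :=
  (∃ i : Fin n, BAdj i ∧ c'.1 = (bsStep c.1 (c.2 i)).1 ∧
      c'.2 = Function.update c.2 i (bsStep c.1 (c.2 i)).2) ∨
  (c'.1 = c.1 ∧ ∃ i j : Fin n, i ≠ j ∧ Adj i j ∧
      c'.2 = Function.update (Function.update c.2 i (agStep (c.2 i) (c.2 j)).1) j
        (agStep (c.2 i) (c.2 j)).2)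

/-- Number of agents whose color is `x`. -/
def cnt {n : ℕ} (C : Fin n → AgSt) (x : Col) : ℕ :=
  (Finset.univ.filter fun a => (C a).1 = x).card

/-!
Depths only ever go from `⊥` to a value, and a value is always either `1`, written by the base
station into an adjacent agent, or `e + 1`, copied from a neighbour of depth `e`. Hence every
reachable configuration satisfies `DepthsWitnessed`: each set depth is `1` at an agent adjacent to
the base station or exceeds by one the depth of a neighbour. This invariant rules out depth `0`,
and then the two claims are read off it; the witness's depth persists since set depths never change.
-/

lemma bsStep_depth (rb : RB) (a : AgSt) :
    (bsStep rb a).2.2 = a.2 ∨ (a.2 = none ∧ (bsStep rb a).2.2 = some 1) := by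
  obtain ⟨c, _ | _ | _ | d⟩ := a <;> cases c <;> simp [bsStep]

lemma agStep_fst_depth (x y : AgSt) :
    (agStep x y).1.2 = x.2 ∨
      (x.2 = none ∧ ∃ e, y.2 = some e ∧ (agStep x y).1.2 = some (e + 1)) := by
  obtain ⟨cx, _ | dx⟩ := x <;> obtain ⟨cy, _ | dy⟩ := y <;> simp [agStep] <;> split_ifs <;> simp

lemma agStep_snd_depth (x y : AgSt) :
    (agStep x y).2.2 = y.2 ∨
      (y.2 = none ∧ ∃ e, x.2 = some e ∧ (agStep x y).2.2 = some (e + 1)) := by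
  obtain ⟨cx, _ | dx⟩ := x <;> obtain ⟨cy, _ | dy⟩ := y <;> simp [agStep] <;> split_ifs <;> simp

section

variable {n : ℕ} {Adj : Fin n → Fin n → Prop} {BAdj : Fin n → Prop} {c c' : Conf n}

lemma Step.depth_cases (hAdjSymm : ∀ i j, Adj i j → Adj j i) (h : Step Adj BAdj c c')
    (v : Fin n) :
    (c'.2 v).2 = (c.2 v).2 ∨
      ((c.2 v).2 = none ∧ BAdj v ∧ (c'.2 v).2 = some 1) ∨
      ((c.2 v).2 = none ∧ ∃ w e, Adj v w ∧ (c.2 w).2 = some e ∧ (c'.2 v).2 = some (e + 1)) := by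
  rcases h with ⟨i, hBi, -, hupd⟩ | ⟨-, i, j, -, hij, hupd⟩ <;> rw [hupd]
  · rcases eq_or_ne v i with rfl | hvi
    · rw [Function.update_self]
      rcases bsStep_depth c.1 (c.2 v) with hkeep | ⟨hnone, hset⟩
      · exact .inl hkeep
      · exact .inr (.inl ⟨hnone, hBi, hset⟩)
    · exact .inl (by rw [Function.update_of_ne hvi])
  · rcases eq_or_ne v j with rfl | hvj
    · rw [Function.update_self]
      rcases agStep_snd_depth (c.2 i) (c.2 v) with hkeep | ⟨hnone, e, he, hset⟩
      · exact .inl hkeep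
      · exact .inr (.inr ⟨hnone, i, e, hAdjSymm _ _ hij, he, hset⟩)
    rw [Function.update_of_ne hvj]
    rcases eq_or_ne v i with rfl | hvi
    · rw [Function.update_self]
      rcases agStep_fst_depth (c.2 v) (c.2 j) with hkeep | ⟨hnone, e, he, hset⟩
      · exact .inl hkeep
      · exact .inr (.inr ⟨hnone, j, e, hij, he, hset⟩)
    · exact .inl (by rw [Function.update_of_ne hvi])

lemma Step.depth_eq_of_eq_some (hAdjSymm : ∀ i j, Adj i j → Adj j i)
    (h : Step Adj BAdj c c') {v : Fin n} {d : ℕ} (hd : (c.2 v).2 = some d) :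
    (c'.2 v).2 = some d := by
  rcases h.depth_cases hAdjSymm v with hkeep | ⟨hnone, -⟩ | ⟨hnone, -⟩
  · rw [hkeep, hd]
  all_goals simp [hd] at hnone

lemma depth_eq_of_reflTransGen (hAdjSymm : ∀ i j, Adj i j → Adj j i)
    (h : Relation.ReflTransGen (Step Adj BAdj) c c') {v : Fin n} {d : ℕ}
    (hd : (c.2 v).2 = some d) : (c'.2 v).2 = some d := by
  induction h with
  | refl => exact hd
  | tail _ hstep ih => exact hstep.depth_eq_of_eq_some hAdjSymm ih

def DepthsWitnessed (Adj : Fin n → Fin n → Prop) (BAdj : Fin n → Prop) (C : Conf n) : Prop :=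
  ∀ v d, (C.2 v).2 = some d →
    (d = 1 ∧ BAdj v) ∨ ∃ w e, Adj v w ∧ (C.2 w).2 = some e ∧ d = e + 1

lemma DepthsWitnessed.depth_ne_zero {C : Conf n} (hC : DepthsWitnessed Adj BAdj C) (v : Fin n) :
    (C.2 v).2 ≠ some 0 := by
  intro h0
  rcases hC v 0 h0 with ⟨h, -⟩ | ⟨w, e, -, -, h⟩ <;> omega

lemma DepthsWitnessed.step (hAdjSymm : ∀ i j, Adj i j → Adj j i) (h : Step Adj BAdj c c')
    (hc : DepthsWitnessed Adj BAdj c) : DepthsWitnessed Adj BAdj c' := by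
  intro v d hd
  rcases h.depth_cases hAdjSymm v with hkeep | ⟨-, hBv, hset⟩ | ⟨-, w, e, hvw, hwe, hset⟩
  · rcases hc v d (hkeep ▸ hd) with hbase | ⟨w, e, hvw, hwe, rfl⟩
    · exact .inl hbase
    · exact .inr ⟨w, e, hvw, h.depth_eq_of_eq_some hAdjSymm hwe, rfl⟩
  · exact .inl ⟨Option.some_injective _ (hd.symm.trans hset), hBv⟩
  · exact .inr ⟨w, e, hvw, h.depth_eq_of_eq_some hAdjSymm hwe,
      Option.some_injective _ (hd.symm.trans hset)⟩

lemma depthsWitnessed_of_reachable (hAdjSymm : ∀ i j, Adj i j → Adj j i) {rb0 : RB}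
    {C : Conf n} (h : Relation.ReflTransGen (Step Adj BAdj) (rb0, fun _ => (Col.ini, none)) C) :
    DepthsWitnessed Adj BAdj C := by
  induction h with
  | refl => intro v d hd; simp at hd
  | tail _ hstep ih => exact ih.step hAdjSymm hstep

end

theorem stmt12 (n : ℕ) (Adj : Fin n → Fin n → Prop)
    (hAdjSymm : ∀ i j, Adj i j → Adj j i) (BAdj : Fin n → Prop)
    (rb0 : RB) (C : Conf n)
    (hreach : Relation.ReflTransGen (Step Adj BAdj)
      (rb0, fun _ => (Col.ini, none)) C) :
    ∀ v₁ : Fin n,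
      (∀ d : ℕ, (C.2 v₁).2 = some (d + 2) →
        ∃ v₂ : Fin n, Adj v₁ v₂ ∧ (C.2 v₂).2 = some (d + 1) ∧
          ∀ C', Relation.ReflTransGen (Step Adj BAdj) C C' →
            (C'.2 v₂).2 = some (d + 1)) ∧
      ((C.2 v₁).2 = some 1 → BAdj v₁) := by
  have hC := depthsWitnessed_of_reachable hAdjSymm hreach
  intro v₁
  constructor
  · intro d hd
    rcases hC v₁ (d + 2) hd with ⟨h, -⟩ | ⟨v₂, e, hadj, hv₂, he⟩
    · omega
    obtain rfl : e = d + 1 := by omega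
    exact ⟨v₂, hadj, hv₂, fun C' hC' => depth_eq_of_reflTransGen hAdjSymm hC' hv₂⟩
  · intro hd
    rcases hC v₁ 1 hd with ⟨-, hB⟩ | ⟨v₂, e, -, hv₂, he⟩
    · exact hB
    · obtain rfl : e = 0 := by omega
      exact absurd hv₂ (hC.depth_ne_zero v₂)
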